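/- Let Ξ be an x-tower site as above with μ points. Then the monomials {x^i y^j : (i,j) ∈ S_x(Ξ)} span a μ-dimensional subspace P of F[x,y] such that the evaluation map p ↦ (p(ξ))_{ξ∈Ξ} restricted to P is a linear isomorphism onto F^μ; equivalently, (Ξ, span{x^i y^j : (i,j) ∈ S_x(Ξ)}) is a regular (poised) interpolation scheme. -/

import Mathlib

open MvPolynomial

/-- The staircase (lower set) `S_x(Ξ) = {(i,j) : j ≤ ν, i ≤ m j}` of an x-tower site. -/
def towerIndex (ν : ℕ) (m : ℕ → ℕ) : Finset (ℕ × ℕ) :=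
  ((Finset.range (m 0 + 1)) ×ˢ Finset.range (ν + 1)).filter (fun p => p.1 ≤ m p.2)

/-- Evaluation of a bivariate polynomial at a point `(a,b)`. -/
noncomputable def ev2 {F : Type*} [Field F] (a b : F) : MvPolynomial (Fin 2) F →+* F :=
  eval (fun k : Fin 2 => if k = 0 then a else b)

/-! Write an element of the span as `P = ∑ j, q_j(x) y^j` with `deg q_j ≤ m_j`. On the bottom
row `y = y_0` the polynomial `P(·, y_0)` has degree at most `m_0` and vanishes at `m_0 + 1` distinct
points, so `y - y_0` divides `P`. The quotient has the same shape with respect to the tower with its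
bottom row removed, and it vanishes there because `y_t ≠ y_0`; induction on the number of rows gives
`P = 0`. So evaluation at the nodes is injective on the span, hence bijective, the linear system
being square. -/

namespace Polynomial

section Semiring

variable {R : Type*} [Semiring R]

theorem natDegree_eval_C_le {P : R[X][X]} {d : ℕ} (h : ∀ j, (P.coeff j).natDegree ≤ d)
    (a : R) : (P.eval (C a)).natDegree ≤ d := by
  rw [eval_eq_sum_range]
  refine natDegree_sum_le_of_forall_le _ _ fun j _ => ?_
  rw [← C_pow]
  exact (natDegree_mul_C_le _ _).trans (h j)

end Semiring

variable {R : Type*} [CommRing R]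

theorem natDegree_coeff_divByMonic_X_sub_C_le {P : R[X][X]} {d j : ℕ}
    (h : ∀ i, j < i → (P.coeff i).natDegree ≤ d) (a : R) :
    ((P /ₘ (X - C (C a))).coeff j).natDegree ≤ d := by
  rw [coeff_divByMonic_X_sub_C]
  refine natDegree_sum_le_of_forall_le _ _ fun i hi => ?_
  rw [← C_pow]
  exact (natDegree_C_mul_le _ _).trans (h i (Finset.mem_Icc.mp hi).1)

theorem coeff_divByMonic_X_sub_C_eq_zero {P : R[X]} {j : ℕ} (h : ∀ i, j < i → P.coeff i = 0)
    (a : R) : (P /ₘ (X - C a)).coeff j = 0 := by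
  rw [coeff_divByMonic_X_sub_C]
  exact Finset.sum_eq_zero fun i hi => by rw [h i (Finset.mem_Icc.mp hi).1, mul_zero]

theorem eq_zero_of_evalEval_eq_zero_of_tower [IsDomain R] {n : ℕ} {m : ℕ → ℕ}
    (hm : AntitoneOn m (Set.Iio n)) {y : ℕ → R} (hy : Set.InjOn y (Set.Iio n))
    {S : ℕ → Finset R} (hS : ∀ t < n, m t < (S t).card) {P : R[X][X]}
    (hP : ∀ j, n ≤ j → P.coeff j = 0) (hPm : ∀ j < n, (P.coeff j).natDegree ≤ m j)
    (hvan : ∀ t < n, ∀ x ∈ S t, P.evalEval x (y t) = 0) : P = 0 := by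
  induction n generalizing m y S P with
  | zero => exact ext fun j => hP j j.zero_le
  | succ n ih =>
    have hPm_le : ∀ i j, j ≤ i → j < n + 1 → (P.coeff i).natDegree ≤ m j := by
      intro i j hji hj
      rcases lt_or_ge i (n + 1) with hi | hi
      · exact (hPm i hi).trans (hm hj hi hji)
      · simp [hP i hi]
    have hroot : P.IsRoot (C (y 0)) :=
      eq_zero_of_natDegree_lt_card_of_eval_eq_zero' _ (S 0) (fun x hx => hvan 0 n.succ_pos x hx)
        ((natDegree_eval_C_le (fun i => hPm_le i 0 i.zero_le n.succ_pos) _).trans_lt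
          (hS 0 n.succ_pos))
    set Q := P /ₘ (X - C (C (y 0)))
    have hPQ : P = (X - C (C (y 0))) * Q := (mul_divByMonic_eq_iff_isRoot.mpr hroot).symm
    suffices Q = 0 by rw [hPQ, this, mul_zero]
    refine ih (m := fun j => m (j + 1)) (y := fun t => y (t + 1)) (S := fun t => S (t + 1))
      (fun i hi j hj hij => hm (by simp at *; omega) (by simp at *; omega) (by omega))
      (fun i hi j hj hij => by simpa using hy (by simp at *; omega) (by simp at *; omega) hij)
      (fun t ht => hS (t + 1) (by omega))
      (fun j hj => coeff_divByMonic_X_sub_C_eq_zero (fun i hi => hP i (by omega)) _)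
      (fun j hj => natDegree_coeff_divByMonic_X_sub_C_le
        (fun i hi => hPm_le i (j + 1) hi (by omega)) _)
      fun t ht x hx => ?_
    have hne : y (t + 1) - y 0 ≠ 0 := sub_ne_zero.mpr fun h => by
      simpa using hy (by simp; omega) (by simp) h
    have hvan' := hvan (t + 1) (by omega) x hx
    rw [hPQ, evalEval_mul] at hvan'
    simpa [hne] using hvan'

end Polynomial

theorem MvPolynomial.linearIndependent_X_zero_pow_mul_X_one_pow (R : Type*) [CommSemiring R] :
    LinearIndependent R (fun p : ℕ × ℕ => (X 0 ^ p.1 * X 1 ^ p.2 : MvPolynomial (Fin 2) R)) := by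
  have hinj : Function.Injective fun p : ℕ × ℕ =>
      Finsupp.single (0 : Fin 2) p.1 + Finsupp.single 1 p.2 := by
    intro p q h
    have h0 := DFunLike.congr_fun h 0
    have h1 := DFunLike.congr_fun h 1
    simp at h0 h1
    exact Prod.ext h0 h1
  have hbasis : (fun p : ℕ × ℕ => (X 0 ^ p.1 * X 1 ^ p.2 : MvPolynomial (Fin 2) R)) =
      basisMonomials (Fin 2) R ∘ fun p => Finsupp.single 0 p.1 + Finsupp.single 1 p.2 := by
    ext p : 1
    simp [coe_basisMonomials, X_pow_eq_monomial, monomial_mul]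
  rw [hbasis]
  exact (basisMonomials (Fin 2) R).linearIndependent.comp _ hinj

theorem existsUnique_eval_sum_smul_eq {F ι σ : Type*} [Field F] [Fintype ι]
    (b : ι → MvPolynomial σ F) (ξ : ι → σ → F)
    (h : ∀ c : ι → F, (∀ q, eval (ξ q) (∑ p, c p • b p) = 0) → c = 0) (f : ι → F) :
    ∃! c : ι → F, ∀ q, eval (ξ q) (∑ p, c p • b p) = f q := by
  let L : (ι → F) →ₗ[F] ι → F :=
    { toFun c q := eval (ξ q) (∑ p, c p • b p)
      map_add' c d := by ext q; simp [add_smul, Finset.sum_add_distrib]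
      map_smul' a c := by ext q; simp [mul_smul, ← Finset.smul_sum] }
  have hL : Function.Injective L := by
    rw [← LinearMap.ker_eq_bot, LinearMap.ker_eq_bot']
    exact fun c hc => h c (congrFun hc)
  obtain ⟨c, hc, huniq⟩ :=
    Function.Bijective.existsUnique ⟨hL, LinearMap.injective_iff_surjective.mp hL⟩ f
  exact ⟨c, congrFun hc, fun d hd => huniq d (funext hd)⟩

section Bivariate

open Polynomial.Bivariate

theorem coeff_equivMvPolynomial_symm_X_zero_pow_mul_X_one_pow {R : Type*} [CommSemiring R]
    (i j k : ℕ) :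
    ((equivMvPolynomial R).symm (X 0 ^ i * X 1 ^ j)).coeff k =
      if k = j then Polynomial.X ^ i else 0 := by
  rw [map_mul, map_pow, map_pow, equivMvPolynomial_symm_X_0, equivMvPolynomial_symm_X_1,
    ← Polynomial.C_pow, Polynomial.coeff_C_mul_X_pow]

theorem evalEval_equivMvPolynomial_symm {F : Type*} [Field F] (a b : F)
    (Q : MvPolynomial (Fin 2) F) : ((equivMvPolynomial F).symm Q).evalEval a b = ev2 a b Q := by
  induction Q using MvPolynomial.induction_on with
  | C c => simp [ev2]
  | add p q hp hq => simp [Polynomial.evalEval_add, hp, hq]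
  | mul_X p i hp => fin_cases i <;> simp [Polynomial.evalEval_mul, Polynomial.evalEval_C, hp, ev2]

theorem mem_towerIndex {ν : ℕ} {m : ℕ → ℕ} (hm : AntitoneOn m (Set.Iic ν)) {p : ℕ × ℕ} :
    p ∈ towerIndex ν m ↔ p.2 ≤ ν ∧ p.1 ≤ m p.2 := by
  simp only [towerIndex, Finset.mem_filter, Finset.mem_product, Finset.mem_range]
  constructor
  · omega
  · intro h
    have := hm (Set.mem_Iic.mpr (Nat.zero_le ν)) h.1 (Nat.zero_le p.2)
    omega

theorem eq_zero_of_ev2_sum_towerIndex_eq_zero {F : Type*} [Field F] {ν : ℕ} {m : ℕ → ℕ}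
    (hm : AntitoneOn m (Set.Iic ν)) {y : ℕ → F} (hy : Set.InjOn y (Set.Iic ν))
    {xs : ℕ → ℕ → F} (hx : ∀ j ≤ ν, Set.InjOn (xs · j) (Set.Iic (m j)))
    (c : towerIndex ν m → F)
    (hc : ∀ q : towerIndex ν m, ev2 (xs q.1.1 q.1.2) (y q.1.2)
      (∑ p, c p • (X 0 ^ p.1.1 * X 1 ^ p.1.2 : MvPolynomial (Fin 2) F)) = 0) :
    c = 0 := by
  classical
  set Q : MvPolynomial (Fin 2) F := ∑ p, c p • (X 0 ^ p.1.1 * X 1 ^ p.1.2)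
  set P := (equivMvPolynomial F).symm Q
  have hmem (p : towerIndex ν m) : p.1.2 ≤ ν ∧ p.1.1 ≤ m p.1.2 := (mem_towerIndex hm).mp p.2
  have hPcoeff (k : ℕ) :
      P.coeff k = ∑ p : towerIndex ν m, if k = p.1.2 then c p • Polynomial.X ^ p.1.1 else 0 := by
    simp only [P, Q, map_sum, map_smul, Polynomial.finsetSum_coeff, Polynomial.coeff_smul,
      coeff_equivMvPolynomial_symm_X_zero_pow_mul_X_one_pow, smul_ite, smul_zero]
  have hP : P = 0 := by
    refine Polynomial.eq_zero_of_evalEval_eq_zero_of_tower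
      (hm.mono (Set.Iio_add_one_eq_Iic ν).le) (hy.mono (Set.Iio_add_one_eq_Iic ν).le)
      (S := fun t => (Finset.range (m t + 1)).image (xs · t)) (fun t ht => ?_) (fun j hj => ?_)
      (fun j hj => ?_) fun t ht x hx => ?_
    · rw [Finset.card_image_of_injOn, Finset.card_range]
      · omega
      · exact (hx t (by simpa using ht)).mono fun s hs => by simpa [Nat.lt_succ_iff] using hs
    · rw [hPcoeff]
      exact Finset.sum_eq_zero fun p _ => if_neg (by have := (hmem p).1; omega)
    · rw [hPcoeff]
      refine Polynomial.natDegree_sum_le_of_forall_le _ _ fun p _ => ?_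
      split_ifs with h
      · exact (Polynomial.natDegree_smul_le _ _).trans
          ((Polynomial.natDegree_X_pow_le _).trans (h ▸ (hmem p).2))
      · simp
    · obtain ⟨s, hs, rfl⟩ := Finset.mem_image.mp hx
      rw [evalEval_equivMvPolynomial_symm]
      exact hc ⟨(s, t), (mem_towerIndex hm).mpr ⟨by omega, by simpa [Nat.lt_succ_iff] using hs⟩⟩
  have hQ : Q = 0 := (map_eq_zero_iff _ (equivMvPolynomial F).symm.injective).mp hP
  funext p
  exact Fintype.linearIndependent_iff.mp
    ((linearIndependent_X_zero_pow_mul_X_one_pow F).comp _ Subtype.val_injective) c hQ p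

end Bivariate

/-- for an x-tower site, the μ monomials `x^i y^j`, `(i,j) ∈ S_x(Ξ)`, are
linearly independent and the evaluation map on their span is a linear isomorphism onto
`F^μ`: `(Ξ, span{x^i y^j})` is a regular (poised) interpolation scheme. -/
theorem tower_monomial_scheme_poised {F : Type*} [Field F] (ν : ℕ) (m : ℕ → ℕ)
    (y : ℕ → F) (xs : ℕ → ℕ → F)
    (hm : ∀ j k, j < k → k ≤ ν → m k < m j)
    (hy : ∀ j k, j ≤ ν → k ≤ ν → y j = y k → j = k)
    (hx : ∀ j s t, j ≤ ν → s ≤ m j → t ≤ m j → xs s j = xs t j → s = t) :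
    LinearIndependent F
      (fun p : towerIndex ν m =>
        (X 0 ^ (p : ℕ × ℕ).1 * X 1 ^ (p : ℕ × ℕ).2 : MvPolynomial (Fin 2) F)) ∧
    ∀ f : ℕ × ℕ → F, ∃! c : towerIndex ν m → F,
      ∀ q : towerIndex ν m,
        ev2 (xs (q : ℕ × ℕ).1 (q : ℕ × ℕ).2) (y (q : ℕ × ℕ).2)
          (∑ p ∈ (towerIndex ν m).attach,
            c p • (X 0 ^ (p : ℕ × ℕ).1 * X 1 ^ (p : ℕ × ℕ).2 : MvPolynomial (Fin 2) F))
          = f q := by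
  have hanti : AntitoneOn m (Set.Iic ν) := fun j _ k hk hjk =>
    hjk.eq_or_lt.elim (fun h => h ▸ le_rfl) fun h => (hm j k h hk).le
  refine ⟨(linearIndependent_X_zero_pow_mul_X_one_pow F).comp _ Subtype.val_injective, fun f => ?_⟩
  exact existsUnique_eval_sum_smul_eq
    (fun p : towerIndex ν m => (X 0 ^ p.1.1 * X 1 ^ p.1.2 : MvPolynomial (Fin 2) F))
    (fun q k => if k = 0 then xs q.1.1 q.1.2 else y q.1.2)
    (eq_zero_of_ev2_sum_towerIndex_eq_zero hanti (fun j hj k hk => hy j k hj hk)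
      (fun j hj s hs t ht => hx j s t hj hs ht))
    (fun q => f q)
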